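/- Let Ω ⊆ ℝ³ be open, let f, g : Ω → ℝ be differentiable with f > 0 and g > 0 on Ω, and let w : Ω → ℍ be differentiable. Then w satisfies the Vekua equation Dw = (∇f/f)·star(w) + (∇g/g)·w on Ω if and only if D( (f/g)·Vec(w) )(x) = − f(x)²·∇( Sc(w)/(f·g) )(x) for every x ∈ Ω. -/

import Mathlib

open MeasureTheory

noncomputable section

/-- The quaternion unit `i`. -/
def qi : Quaternion ℝ := ⟨0, 1, 0, 0⟩
/-- The quaternion unit `j`. -/
def qj : Quaternion ℝ := ⟨0, 0, 1, 0⟩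
/-- The quaternion unit `k`. -/
def qk : Quaternion ℝ := ⟨0, 0, 0, 1⟩

/-- Partial derivative of a quaternion-valued function on `ℝ³`. -/
def pd (i : Fin 3) (w : (Fin 3 → ℝ) → Quaternion ℝ) (x : Fin 3 → ℝ) : Quaternion ℝ :=
  fderiv ℝ w x (Pi.single i 1)

/-- Partial derivative of a real-valued function on `ℝ³`. -/
def pdR (i : Fin 3) (u : (Fin 3 → ℝ) → ℝ) (x : Fin 3 → ℝ) : ℝ :=
  fderiv ℝ u x (Pi.single i 1)

/-- Moisil–Teodorescu operator `Dw = i ∂₁ w + j ∂₂ w + k ∂₃ w`. -/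
def Dq (w : (Fin 3 → ℝ) → Quaternion ℝ) (x : Fin 3 → ℝ) : Quaternion ℝ :=
  qi * pd 0 w x + qj * pd 1 w x + qk * pd 2 w x

/-- Gradient of a real-valued function, viewed as a pure quaternion. -/
def gradq (u : (Fin 3 → ℝ) → ℝ) (x : Fin 3 → ℝ) : Quaternion ℝ :=
  ⟨0, pdR 0 u x, pdR 1 u x, pdR 2 u x⟩

/-- Laplacian of a real-valued function on `ℝ³`. -/
def lapl (u : (Fin 3 → ℝ) → ℝ) (x : Fin 3 → ℝ) : ℝ :=
  pdR 0 (pdR 0 u) x + pdR 1 (pdR 1 u) x + pdR 2 (pdR 2 u) x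

/-- Vector (non-scalar) part of a quaternion. -/
def Vecq (q : Quaternion ℝ) : Quaternion ℝ := q - (q.re : Quaternion ℝ)

/-- Divergence of the vector part of a quaternion-valued function. -/
def divVec (α : (Fin 3 → ℝ) → Quaternion ℝ) (x : Fin 3 → ℝ) : ℝ :=
  pdR 0 (fun y => (α y).imI) x + pdR 1 (fun y => (α y).imJ) x + pdR 2 (fun y => (α y).imK) x

/-!
With `c = f/g`, the Leibniz rule `D(c v) = ∇c v + c Dv`, the identity `D(Vec w) = Dw - ∇(Sc w)`
and the quotient rule for gradients give, after splitting `star w = Sc w - Vec w` and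
`w = Sc w + Vec w`, the pointwise identity
`D(c Vec w) + f² ∇(Sc w / (f g)) = c (Dw - (∇f/f) star w - (∇g/g) w)`.
As `c` does not vanish, the two equations hold at the same points.
-/

open scoped Quaternion

section Calculus

variable {u v : (Fin 3 → ℝ) → ℝ} {p q : (Fin 3 → ℝ) → ℍ} {x : Fin 3 → ℝ}

theorem DifferentiableAt.quaternion_re (hp : DifferentiableAt ℝ p x) :
    DifferentiableAt ℝ (fun y => (p y).re) x :=
  (LinearMap.toContinuousLinearMap (QuaternionAlgebra.reₗ (-1) 0 (-1)) :
    ℍ →L[ℝ] ℝ).differentiableAt.comp x hp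

theorem DifferentiableAt.quaternion_coe (hu : DifferentiableAt ℝ u x) :
    DifferentiableAt ℝ (fun y => (u y : ℍ)) x := by
  simpa [Function.comp_def, Quaternion.algebraMap_def] using
    (algebraMapCLM ℝ ℍ).differentiableAt.comp x hu

theorem DifferentiableAt.quaternion_vecq (hp : DifferentiableAt ℝ p x) :
    DifferentiableAt ℝ (fun y => Vecq (p y)) x :=
  hp.sub hp.quaternion_re.quaternion_coe

theorem pdR_mul (i : Fin 3) (hu : DifferentiableAt ℝ u x) (hv : DifferentiableAt ℝ v x) :
    pdR i (fun y => u y * v y) x = u x * pdR i v x + v x * pdR i u x := by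
  simp [pdR, fderiv_fun_mul hu hv]

theorem pdR_inv (i : Fin 3) (hv : DifferentiableAt ℝ v x) (h0 : v x ≠ 0) :
    pdR i (fun y => (v y)⁻¹) x = -(v x ^ 2)⁻¹ * pdR i v x := by
  have h : fderiv ℝ (fun y => (v y)⁻¹) x =
      (fderiv ℝ (fun t : ℝ => t⁻¹) (v x)).comp (fderiv ℝ v x) :=
    fderiv_comp x (differentiableAt_inv h0) hv
  simp [pdR, h, fderiv_inv, mul_comm]

theorem gradq_eq_smul_add (u : (Fin 3 → ℝ) → ℝ) (x : Fin 3 → ℝ) :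
    gradq u x = pdR 0 u x • qi + pdR 1 u x • qj + pdR 2 u x • qk := by
  -- the projections must be pushed through `•` before `qi` is unfolded: its body is typed
  -- as a `QuaternionAlgebra`, on which the `Quaternion` simp lemmas no longer apply
  ext <;> simp only [Quaternion.re_add, Quaternion.imI_add, Quaternion.imJ_add,
    Quaternion.imK_add, Quaternion.re_smul, Quaternion.imI_smul, Quaternion.imJ_smul,
    Quaternion.imK_smul] <;> simp [gradq, qi, qj, qk]

theorem gradq_mul (hu : DifferentiableAt ℝ u x) (hv : DifferentiableAt ℝ v x) :
    gradq (fun y => u y * v y) x = u x • gradq v x + v x • gradq u x := by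
  simp only [gradq_eq_smul_add, pdR_mul _ hu hv]
  module

theorem gradq_inv (hv : DifferentiableAt ℝ v x) (h0 : v x ≠ 0) :
    gradq (fun y => (v y)⁻¹) x = -(v x ^ 2)⁻¹ • gradq v x := by
  simp only [gradq_eq_smul_add, pdR_inv _ hv h0]
  module

theorem gradq_div (hu : DifferentiableAt ℝ u x) (hv : DifferentiableAt ℝ v x) (h0 : v x ≠ 0) :
    gradq (fun y => u y / v y) x = (v x)⁻¹ • gradq u x - (u x / v x ^ 2) • gradq v x := by
  simp only [div_eq_mul_inv]
  rw [gradq_mul (v := fun y => (v y)⁻¹) hu (hv.inv h0), gradq_inv hv h0]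
  module

theorem pd_smul (i : Fin 3) (hu : DifferentiableAt ℝ u x) (hp : DifferentiableAt ℝ p x) :
    pd i (fun y => u y • p y) x = pdR i u x • p x + u x • pd i p x := by
  simp [pd, pdR, fderiv_fun_smul hu hp, add_comm]

theorem Dq_smul (hu : DifferentiableAt ℝ u x) (hp : DifferentiableAt ℝ p x) :
    Dq (fun y => u y • p y) x = gradq u x * p x + u x • Dq p x := by
  simp only [Dq, pd_smul _ hu hp, gradq_eq_smul_add, mul_add, add_mul, mul_smul_comm,
    smul_mul_assoc, smul_add]
  abel

theorem Dq_sub (hp : DifferentiableAt ℝ p x) (hq : DifferentiableAt ℝ q x) :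
    Dq (fun y => p y - q y) x = Dq p x - Dq q x := by
  simp only [Dq, pd, fderiv_fun_sub hp hq, FunLike.coe_sub, Pi.sub_apply, mul_sub]
  abel

theorem Dq_coe (hu : DifferentiableAt ℝ u x) : Dq (fun y => (u y : ℍ)) x = gradq u x := by
  have h : (fun y => (u y : ℍ)) = fun y => u y • (1 : ℍ) := by
    funext y; ext <;> simp
  rw [h, Dq_smul hu (differentiableAt_const _)]
  simp [Dq, pd]

theorem Dq_vecq (hp : DifferentiableAt ℝ p x) :
    Dq (fun y => Vecq (p y)) x = Dq p x - gradq (fun y => (p y).re) x := by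
  rw [← Dq_coe hp.quaternion_re, ← Dq_sub hp hp.quaternion_re.quaternion_coe]
  rfl

end Calculus

theorem mul_eq_re_smul_add (p q : ℍ) : p * q = q.re • p + p * Vecq q := by
  rw [Vecq, mul_sub, Quaternion.mul_coe_eq_smul]
  abel

theorem mul_star_eq_re_smul_sub (p q : ℍ) : p * star q = q.re • p - p * Vecq q := by
  rw [Quaternion.star_eq_two_re_sub, mul_sub, Quaternion.mul_coe_eq_smul, mul_eq_re_smul_add p q]
  module

section Vekua

variable {f g : (Fin 3 → ℝ) → ℝ} {w : (Fin 3 → ℝ) → ℍ} {x : Fin 3 → ℝ}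

theorem system_add_eq_smul_vekua_sub (hf : DifferentiableAt ℝ f x) (hg : DifferentiableAt ℝ g x)
    (hw : DifferentiableAt ℝ w x) (hf0 : f x ≠ 0) (hg0 : g x ≠ 0) :
    Dq (fun y => (f y / g y) • Vecq (w y)) x +
        (f x ^ 2) • gradq (fun y => (w y).re / (f y * g y)) x =
      (f x / g x) • (Dq w x -
        ((f x)⁻¹ • (gradq f x * star (w x)) + (g x)⁻¹ • (gradq g x * w x))) := by
  have hfg : DifferentiableAt ℝ (fun y => f y / g y) x := by
    simpa only [div_eq_mul_inv] using hf.fun_mul (hg.fun_inv hg0)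
  rw [Dq_smul hfg hw.quaternion_vecq, Dq_vecq hw, gradq_div hf hg hg0,
    gradq_div (v := fun y => f y * g y) hw.quaternion_re (hf.fun_mul hg) (mul_ne_zero hf0 hg0),
    gradq_mul hf hg, mul_star_eq_re_smul_sub, mul_eq_re_smul_add (gradq g x)]
  simp only [sub_mul, smul_mul_assoc]
  match_scalars <;> field_simp
  ring

end Vekua

theorem vekua_iff_system_general (Ω : Set (Fin 3 → ℝ))
    (f g : (Fin 3 → ℝ) → ℝ) (w : (Fin 3 → ℝ) → Quaternion ℝ)
    (hf : ∀ x ∈ Ω, DifferentiableAt ℝ f x) (hg : ∀ x ∈ Ω, DifferentiableAt ℝ g x)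
    (hfpos : ∀ x ∈ Ω, 0 < f x) (hgpos : ∀ x ∈ Ω, 0 < g x)
    (hw : ∀ x ∈ Ω, DifferentiableAt ℝ w x) :
    (∀ x ∈ Ω, Dq w x =
        (f x)⁻¹ • (gradq f x * star (w x)) + (g x)⁻¹ • (gradq g x * w x)) ↔
    (∀ x ∈ Ω, Dq (fun y => (f y / g y) • Vecq (w y)) x =
        -((f x ^ 2) • gradq (fun y => (w y).re / (f y * g y)) x)) := by
  refine forall₂_congr fun x hx => ?_
  have hquot : f x / g x ≠ 0 := (div_pos (hfpos x hx) (hgpos x hx)).ne'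
  rw [← sub_eq_zero, ← sub_eq_zero (a := Dq _ x), sub_neg_eq_add,
    system_add_eq_smul_vekua_sub (hf x hx) (hg x hx) (hw x hx) (hfpos x hx).ne' (hgpos x hx).ne',
    smul_eq_zero, or_iff_right hquot]

/-- `w` solves the Vekua equation `Dw = (∇f/f)·star w + (∇g/g)·w` iff
`D((f/g)·Vec w) = −f²·∇(Sc w/(fg))` on `Ω`. -/
theorem vekua_iff_system (Ω : Set (Fin 3 → ℝ)) (hΩ : IsOpen Ω)
    (f g : (Fin 3 → ℝ) → ℝ) (w : (Fin 3 → ℝ) → Quaternion ℝ)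
    (hf : ∀ x ∈ Ω, DifferentiableAt ℝ f x) (hg : ∀ x ∈ Ω, DifferentiableAt ℝ g x)
    (hfpos : ∀ x ∈ Ω, 0 < f x) (hgpos : ∀ x ∈ Ω, 0 < g x)
    (hw : ∀ x ∈ Ω, DifferentiableAt ℝ w x) :
    (∀ x ∈ Ω, Dq w x =
        (f x)⁻¹ • (gradq f x * star (w x)) + (g x)⁻¹ • (gradq g x * w x)) ↔
    (∀ x ∈ Ω, Dq (fun y => (f y / g y) • Vecq (w y)) x =
        -((f x ^ 2) • gradq (fun y => (w y).re / (f y * g y)) x)) :=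
  vekua_iff_system_general Ω f g w hf hg hfpos hgpos hw

end
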